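/- (Fundamental theorem, (a) ⇒ (b)): If the no-arbitrage condition 𝒜_T ∩ L^0_+ = {0} holds, then F_t ∩ L^0_+(𝓕_t) = {0} for every t = 1, …, T. -/
import Mathlib


open MeasureTheory Filter Finset
open scoped ENNReal NNReal

noncomputable section

namespace BidAskFTAP

variable {Ω : Type*}

/-- Componentwise positive part of a vector in `ℝ^d`. -/
def posPart {d : ℕ} (x : Fin d → ℝ) : Fin d → ℝ := fun i => max (x i) 0

/-- Componentwise negative part of a vector in `ℝ^d`. -/
def negPart {d : ℕ} (x : Fin d → ℝ) : Fin d → ℝ := fun i => max (-(x i)) 0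

/-- Inner product on `ℝ^d`. -/
def dotp {d : ℕ} (x y : Fin d → ℝ) : ℝ := ∑ i, x i * y i

section Market

variable [m : MeasurableSpace Ω] {d : ℕ}

/-- `F` is a filtration on `(Ω, m)` with horizon `T`: monotone, sub-σ-algebras of `m`,
and `F T = m` (i.e. `𝓕_T = 𝓕`). -/
def IsFiltration (F : ℕ → MeasurableSpace Ω) (T : ℕ) : Prop :=
  Monotone F ∧ (∀ t, F t ≤ m) ∧ F T = m

/-- Adaptedness of an `ℝ^d`-valued process up to time `T`. -/
def AdaptedProc (F : ℕ → MeasurableSpace Ω) (T : ℕ) (S : ℕ → Ω → Fin d → ℝ) : Prop :=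
  ∀ t ≤ T, Measurable[F t] (S t)

/-- Standing assumptions on the bid and ask price processes `S̲ = Sb`, `S̄ = Sa`:
adapted, strictly positive components, and `S̲ ≤ S̄` a.s. -/
def IsBidAsk (P : Measure Ω) (F : ℕ → MeasurableSpace Ω) (T : ℕ)
    (Sb Sa : ℕ → Ω → Fin d → ℝ) : Prop :=
  AdaptedProc F T Sb ∧ AdaptedProc F T Sa ∧
  (∀ t ≤ T, ∀ i, ∀ᵐ ω ∂P, 0 < Sb t ω i) ∧
  (∀ t ≤ T, ∀ i, ∀ᵐ ω ∂P, 0 < Sa t ω i) ∧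
  (∀ t ≤ T, ∀ i, ∀ᵐ ω ∂P, Sb t ω i ≤ Sa t ω i)

/-- A trading strategy on horizon `T`: predictable (`H t` is `𝓕_{t-1}`-measurable),
with the convention `H 0 = 0` (so that `ΔH 1 = H 1`). -/
def IsStrategy (F : ℕ → MeasurableSpace Ω) (T : ℕ) (H : ℕ → Ω → Fin d → ℝ) : Prop :=
  H 0 = 0 ∧ ∀ t, 1 ≤ t → t ≤ T → Measurable[F (t - 1)] (H t)

/-- Membership in `𝒫_T^+`: componentwise nonnegative. -/
def NonnegStrategy (T : ℕ) (H : ℕ → Ω → Fin d → ℝ) : Prop :=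
  ∀ t ≤ T, ∀ ω, ∀ i, 0 ≤ H t ω i

/-- Membership in `𝒫_T^-`: componentwise nonpositive. -/
def NonposStrategy (T : ℕ) (H : ℕ → Ω → Fin d → ℝ) : Prop :=
  ∀ t ≤ T, ∀ ω, ∀ i, H t ω i ≤ 0

/-- Uniformly bounded strategy. -/
def BoundedStrategy (T : ℕ) (H : ℕ → Ω → Fin d → ℝ) : Prop :=
  ∃ C : ℝ, ∀ t ≤ T, ∀ ω, ∀ i, |H t ω i| ≤ C

/-- The immediate–liquidation value process
`x_T(H) = -∑_{j=1}^T (ΔH_j)⁺·S̄_{j-1} + ∑_{j=1}^T (ΔH_j)⁻·S̲_{j-1} + (H_T)⁺·S̲_T - (H_T)⁻·S̄_T`. -/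
def xval (Sb Sa : ℕ → Ω → Fin d → ℝ) (T : ℕ) (H : ℕ → Ω → Fin d → ℝ) (ω : Ω) : ℝ :=
  (∑ j ∈ Icc 1 T, (dotp (negPart (H j ω - H (j - 1) ω)) (Sb (j - 1) ω)
    - dotp (posPart (H j ω - H (j - 1) ω)) (Sa (j - 1) ω)))
  + dotp (posPart (H T ω)) (Sb T ω) - dotp (negPart (H T ω)) (Sa T ω)

/-- The gain `(H · S)_T = ∑_{j=1}^T H_j · (S_j - S_{j-1})`. -/
def gain (S : ℕ → Ω → Fin d → ℝ) (T : ℕ) (H : ℕ → Ω → Fin d → ℝ) (ω : Ω) : ℝ :=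
  ∑ j ∈ Icc 1 T, dotp (H j ω) (S j ω - S (j - 1) ω)

/-- Membership (as elements of `L⁰`, i.e. up to a.s. equality) in
`𝒜_t = ℛ_t - L⁰₊(𝓕_t)`. -/
def memA (P : Measure Ω) (F : ℕ → MeasurableSpace Ω) (Sb Sa : ℕ → Ω → Fin d → ℝ)
    (t : ℕ) (f : Ω → ℝ) : Prop :=
  ∃ H : ℕ → Ω → Fin d → ℝ, IsStrategy F t H ∧
    ∃ r : Ω → ℝ, Measurable[F t] r ∧ (∀ᵐ ω ∂P, 0 ≤ r ω) ∧
      f =ᵐ[P] fun ω => xval Sb Sa t H ω - r ω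

/-- The no-arbitrage condition `𝒜_t ∩ L⁰₊(𝓕_t) = {0}` at horizon `t`. -/
def NA (P : Measure Ω) (F : ℕ → MeasurableSpace Ω) (Sb Sa : ℕ → Ω → Fin d → ℝ)
    (t : ℕ) : Prop :=
  ∀ f : Ω → ℝ, memA P F Sb Sa t f → (∀ᵐ ω ∂P, 0 ≤ f ω) → f =ᵐ[P] 0

/-- Two measures are equivalent: mutually absolutely continuous. -/
def EquivMeasure (P Q : Measure Ω) : Prop := P ≪ Q ∧ Q ≪ P

/-- The Radon–Nikodym density `dQ/dP` belongs to `L^∞(P)`. -/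
def BoundedDensity (P Q : Measure Ω) : Prop :=
  ∃ C : ℝ≥0, ∀ᵐ ω ∂P, Q.rnDeriv P ω ≤ (C : ℝ≥0∞)

/-- `Q` is an equivalent bid-ask martingale measure (EBAMM) for `(S̲, S̄)`:
`Q ∼ P`, all `S̄_t` are `Q`-integrable, and for all `1 ≤ t ≤ T` and coordinates `i`:
`S̲_{t-1}^i ≤ E_Q[S̄_t^i | 𝓕_{t-1}]` and `E_Q[S̲_t^i | 𝓕_{t-1}] ≤ S̄_{t-1}^i` a.s. -/
def IsEBAMM (P : Measure Ω) (F : ℕ → MeasurableSpace Ω) (T : ℕ)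
    (Sb Sa : ℕ → Ω → Fin d → ℝ) (Q : Measure Ω) : Prop :=
  IsProbabilityMeasure Q ∧ EquivMeasure P Q ∧
  (∀ t ≤ T, ∀ i, Integrable (fun ω => Sa t ω i) Q) ∧
  (∀ t, 1 ≤ t → t ≤ T → ∀ i,
    (∀ᵐ ω ∂P, Sb (t - 1) ω i ≤ (Q[fun ω => Sa t ω i | F (t - 1)]) ω) ∧
    (∀ᵐ ω ∂P, (Q[fun ω => Sb t ω i | F (t - 1)]) ω ≤ Sa (t - 1) ω i))

/-- `(S̃, Q)` is a consistent price system: `Q ∼ P`, `S̃` adapted, evolving between bid and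
ask prices, and a `Q`-martingale. -/
def IsCPS (P : Measure Ω) (F : ℕ → MeasurableSpace Ω) (T : ℕ)
    (Sb Sa St : ℕ → Ω → Fin d → ℝ) (Q : Measure Ω) : Prop :=
  IsProbabilityMeasure Q ∧ EquivMeasure P Q ∧ AdaptedProc F T St ∧
  (∀ t ≤ T, ∀ i, Integrable (fun ω => St t ω i) Q) ∧
  (∀ t ≤ T, ∀ i, ∀ᵐ ω ∂P, Sb t ω i ≤ St t ω i ∧ St t ω i ≤ Sa t ω i) ∧
  (∀ t, 1 ≤ t → t ≤ T → ∀ i,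
    Q[fun ω => St t ω i | F (t - 1)] =ᵐ[P] fun ω => St (t - 1) ω i)

/-- `(S̃, Q)` is a supermartingale consistent price system. -/
def IsSupCPS (P : Measure Ω) (F : ℕ → MeasurableSpace Ω) (T : ℕ)
    (Sb Sa St : ℕ → Ω → Fin d → ℝ) (Q : Measure Ω) : Prop :=
  IsProbabilityMeasure Q ∧ EquivMeasure P Q ∧ AdaptedProc F T St ∧
  (∀ t ≤ T, ∀ i, Integrable (fun ω => St t ω i) Q) ∧
  (∀ t ≤ T, ∀ i, ∀ᵐ ω ∂P, Sb t ω i ≤ St t ω i ∧ St t ω i ≤ Sa t ω i) ∧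
  (∀ t, 1 ≤ t → t ≤ T → ∀ i,
    (∀ᵐ ω ∂P, (Q[fun ω => St t ω i | F (t - 1)]) ω ≤ St (t - 1) ω i))

/-- `(S̃, Q)` is a submartingale consistent price system. -/
def IsSubCPS (P : Measure Ω) (F : ℕ → MeasurableSpace Ω) (T : ℕ)
    (Sb Sa St : ℕ → Ω → Fin d → ℝ) (Q : Measure Ω) : Prop :=
  IsProbabilityMeasure Q ∧ EquivMeasure P Q ∧ AdaptedProc F T St ∧
  (∀ t ≤ T, ∀ i, Integrable (fun ω => St t ω i) Q) ∧
  (∀ t ≤ T, ∀ i, ∀ᵐ ω ∂P, Sb t ω i ≤ St t ω i ∧ St t ω i ≤ Sa t ω i) ∧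
  (∀ t, 1 ≤ t → t ≤ T → ∀ i,
    (∀ᵐ ω ∂P, St (t - 1) ω i ≤ (Q[fun ω => St t ω i | F (t - 1)]) ω))

/-- Membership (up to a.s. equality) in
`F_{t-1,t+k} = ℛ_{t-1,t+k}⁺ + ℛ_{t-1,t+k}⁻ - L⁰₊(𝓕_{t+k})`:
`f = Hp·(S̲_{t+k} - S̄_{t-1}) - Hm·(S̄_{t+k} - S̲_{t-1}) - r` with `Hp, Hm ≥ 0`
`𝓕_{t-1}`-measurable and `r ∈ L⁰₊(𝓕_{t+k})`. -/
def memFtk (P : Measure Ω) (F : ℕ → MeasurableSpace Ω) (Sb Sa : ℕ → Ω → Fin d → ℝ)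
    (t k : ℕ) (f : Ω → ℝ) : Prop :=
  ∃ (Hp Hm : Ω → Fin d → ℝ) (r : Ω → ℝ),
    Measurable[F (t - 1)] Hp ∧ Measurable[F (t - 1)] Hm ∧
    (∀ ω i, 0 ≤ Hp ω i) ∧ (∀ ω i, 0 ≤ Hm ω i) ∧
    Measurable[F (t + k)] r ∧ (∀ᵐ ω ∂P, 0 ≤ r ω) ∧
    f =ᵐ[P] fun ω =>
      dotp (Hp ω) (Sb (t + k) ω - Sa (t - 1) ω)
        - dotp (Hm ω) (Sa (t + k) ω - Sb (t - 1) ω) - r ω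

/-- Membership (up to a.s. equality) in
`F_t = ∑_{j<t} ℛ_{j,t}⁺ + ∑_{j<t} ℛ_{j,t}⁻ - L⁰₊(𝓕_t)`. -/
def memFt (P : Measure Ω) (F : ℕ → MeasurableSpace Ω) (Sb Sa : ℕ → Ω → Fin d → ℝ)
    (t : ℕ) (f : Ω → ℝ) : Prop :=
  ∃ (Hp Hm : ℕ → Ω → Fin d → ℝ) (r : Ω → ℝ),
    (∀ j < t, Measurable[F j] (Hp j) ∧ Measurable[F j] (Hm j)) ∧
    (∀ j < t, ∀ ω i, 0 ≤ Hp j ω i ∧ 0 ≤ Hm j ω i) ∧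
    Measurable[F t] r ∧ (∀ᵐ ω ∂P, 0 ≤ r ω) ∧
    f =ᵐ[P] fun ω =>
      (∑ j ∈ range t,
        (dotp (Hp j ω) (Sb t ω - Sa j ω) - dotp (Hm j ω) (Sa t ω - Sb j ω))) - r ω

/-- `x_{s,u}(H) = -H⁺·S̄_s + H⁻·S̲_s + H⁺·S̲_u - H⁻·S̄_u` for an `𝓕_s`-measurable `H`. -/
def xval2 (Sb Sa : ℕ → Ω → Fin d → ℝ) (s u : ℕ) (H : Ω → Fin d → ℝ) (ω : Ω) : ℝ :=
  - dotp (posPart (H ω)) (Sa s ω) + dotp (negPart (H ω)) (Sb s ω)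
    + dotp (posPart (H ω)) (Sb u ω) - dotp (negPart (H ω)) (Sa u ω)

/-- Membership (up to a.s. equality) in `𝒜_{t-1,t+k} = ℛ_{t-1,t+k} - L⁰₊(𝓕_{t+k})` where
`ℛ_{t-1,t+k} = {x_{t-1,t+k}(H) : H ∈ L⁰(ℝ^d, 𝓕_{t-1})}`. -/
def memA2 (P : Measure Ω) (F : ℕ → MeasurableSpace Ω) (Sb Sa : ℕ → Ω → Fin d → ℝ)
    (t k : ℕ) (f : Ω → ℝ) : Prop :=
  ∃ (H : Ω → Fin d → ℝ) (r : Ω → ℝ),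
    Measurable[F (t - 1)] H ∧ Measurable[F (t + k)] r ∧ (∀ᵐ ω ∂P, 0 ≤ r ω) ∧
    f =ᵐ[P] fun ω => xval2 Sb Sa (t - 1) (t + k) H ω - r ω

end Market

end BidAskFTAP

namespace BidAskFTAP

section Aux

variable {Ω : Type*} [m : MeasurableSpace Ω] {d : ℕ}

lemma key1 (a b p q : ℝ) (ha : 0 ≤ a) (hb : 0 ≤ b) (hpq : p ≤ q) :
    b * p - a * q ≤ max (-(a - b)) 0 * p - max (a - b) 0 * q := by
  rcases le_total a b with h | h
  · rw [max_eq_left (by linarith), max_eq_right (by linarith)]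
    nlinarith
  · rw [max_eq_right (by linarith), max_eq_left (by linarith)]
    nlinarith

lemma key2 (a b p q : ℝ) (ha : 0 ≤ a) (hb : 0 ≤ b) (hpq : p ≤ q) :
    a * p - b * q ≤ max (a - b) 0 * p - max (-(a - b)) 0 * q := by
  rcases le_total a b with h | h
  · rw [max_eq_right (by linarith), max_eq_left (by linarith)]
    nlinarith
  · rw [max_eq_left (by linarith), max_eq_right (by linarith)]
    nlinarith

lemma vkey1 (a b p q : Fin d → ℝ) (ha : ∀ i, 0 ≤ a i) (hb : ∀ i, 0 ≤ b i)
    (hpq : ∀ i, p i ≤ q i) :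
    dotp b p - dotp a q ≤ dotp (negPart (a - b)) p - dotp (posPart (a - b)) q := by
  simp only [dotp, negPart, posPart, Pi.sub_apply, ← Finset.sum_sub_distrib]
  exact Finset.sum_le_sum fun i _ => key1 _ _ _ _ (ha i) (hb i) (hpq i)

lemma vkey2 (a b p q : Fin d → ℝ) (ha : ∀ i, 0 ≤ a i) (hb : ∀ i, 0 ≤ b i)
    (hpq : ∀ i, p i ≤ q i) :
    dotp a p - dotp b q ≤ dotp (posPart (a - b)) p - dotp (negPart (a - b)) q := by
  simp only [dotp, negPart, posPart, Pi.sub_apply, ← Finset.sum_sub_distrib]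
  exact Finset.sum_le_sum fun i _ => key2 _ _ _ _ (ha i) (hb i) (hpq i)

lemma dotp_zero_left (p : Fin d → ℝ) : dotp 0 p = 0 := by simp [dotp]

lemma posPart_zero : posPart (0 : Fin d → ℝ) = 0 := by funext i; simp [posPart]

lemma negPart_zero : negPart (0 : Fin d → ℝ) = 0 := by funext i; simp [negPart]

lemma posPart_neg (x : Fin d → ℝ) : posPart (-x) = negPart x := by
  funext i; simp [posPart, negPart]

lemma negPart_neg (x : Fin d → ℝ) : negPart (-x) = posPart x := by
  funext i; simp [posPart, negPart]

lemma dotp_sub_right (x p q : Fin d → ℝ) : dotp x (p - q) = dotp x p - dotp x q := by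
  simp [dotp, mul_sub, Finset.sum_sub_distrib]

lemma dotp_sum_left {ι : Type*} (s : Finset ι) (v : ι → Fin d → ℝ) (p : Fin d → ℝ) :
    dotp (∑ j ∈ s, v j) p = ∑ j ∈ s, dotp (v j) p := by
  simp only [dotp, Finset.sum_apply, Finset.sum_mul]
  exact Finset.sum_comm

lemma meas_dotp {f g : Ω → Fin d → ℝ} (hf : Measurable f) (hg : Measurable g) :
    Measurable fun ω => dotp (f ω) (g ω) :=
  Finset.measurable_sum _ fun i _ =>
    ((measurable_pi_apply i).comp hf).mul ((measurable_pi_apply i).comp hg)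

lemma meas_posPart {f : Ω → Fin d → ℝ} (hf : Measurable f) :
    Measurable fun ω => posPart (f ω) :=
  measurable_pi_lambda _ fun i => ((measurable_pi_apply i).comp hf).max measurable_const

lemma meas_negPart {f : Ω → Fin d → ℝ} (hf : Measurable f) :
    Measurable fun ω => negPart (f ω) :=
  measurable_pi_lambda _ fun i => ((measurable_pi_apply i).comp hf).neg.max measurable_const

end Aux

end BidAskFTAP

open BidAskFTAP in
/-- (Fundamental theorem, (a) ⇒ (b)) If `𝒜_T ∩ L⁰₊ = {0}`, then
`F_t ∩ L⁰₊(𝓕_t) = {0}` for every `t = 1, …, T`. -/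
theorem stmt8 {Ω : Type*} [m : MeasurableSpace Ω] {d T : ℕ} (hT : 1 ≤ T)
    (P : MeasureTheory.Measure Ω) [MeasureTheory.IsProbabilityMeasure P]
    (hcomp : P.IsComplete)
    (F : ℕ → MeasurableSpace Ω) (hF : IsFiltration F T)
    (Sb Sa : ℕ → Ω → Fin d → ℝ) (hBA : IsBidAsk P F T Sb Sa)
    (hNA : NA P F Sb Sa T) :
    ∀ t, 1 ≤ t → t ≤ T →
      ∀ f : Ω → ℝ, memFt P F Sb Sa t f → (∀ᵐ ω ∂P, 0 ≤ f ω) → f =ᵐ[P] 0 := by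
  intro t ht1 htT f hmem hf0
  obtain ⟨Hp, Hm, r, hmeasH, hnn, hrmeas, hr0, hf⟩ := hmem
  obtain ⟨hFmono, hFle, hFT⟩ := hF
  obtain ⟨hAb, hAa, hpos_b, hpos_a, hba⟩ := hBA
  classical
  set H : ℕ → Ω → Fin d → ℝ :=
    fun s ω => if s ≤ t then ∑ j ∈ Finset.range s, (Hp j ω - Hm j ω) else 0 with hHdef
  have hmeasHp : ∀ j, j < t → Measurable (Hp j) := fun j hj =>
    (hmeasH j hj).1.mono (hFle j) le_rfl
  have hmeasHm : ∀ j, j < t → Measurable (Hm j) := fun j hj =>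
    (hmeasH j hj).2.mono (hFle j) le_rfl
  have hmeasHs : ∀ s, Measurable (H s) := by
    intro s
    by_cases hs : s ≤ t
    · have hrw : H s = fun ω => ∑ j ∈ Finset.range s, (Hp j ω - Hm j ω) := by
        simp [hHdef, hs]
      rw [hrw]
      exact Finset.measurable_sum _ fun j hj =>
        (hmeasHp j (lt_of_lt_of_le (Finset.mem_range.1 hj) hs)).sub
          (hmeasHm j (lt_of_lt_of_le (Finset.mem_range.1 hj) hs))
    · have hrw : H s = fun _ => 0 := by simp [hHdef, hs]
      rw [hrw]; exact measurable_const
  have hmeasSb : ∀ s, s ≤ T → Measurable (Sb s) := fun s hs =>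
    (hAb s hs).mono (hFle s) le_rfl
  have hmeasSa : ∀ s, s ≤ T → Measurable (Sa s) := fun s hs =>
    (hAa s hs).mono (hFle s) le_rfl
  have hrm : Measurable r := hrmeas.mono (hFle t) le_rfl
  have hstrat : IsStrategy F T H := by
    constructor
    · funext ω; simp [hHdef]
    · intro s hs1 hsT
      by_cases hs : s ≤ t
      · have hrw : H s = fun ω => ∑ j ∈ Finset.range s, (Hp j ω - Hm j ω) := by
          simp [hHdef, hs]
        rw [hrw]
        refine Finset.measurable_sum _ fun j hj => Measurable.sub ?_ ?_
        · exact ((hmeasH j (lt_of_lt_of_le (Finset.mem_range.1 hj) hs)).1).mono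
            (hFmono (Nat.le_pred_of_lt (Finset.mem_range.1 hj))) le_rfl
        · exact ((hmeasH j (lt_of_lt_of_le (Finset.mem_range.1 hj) hs)).2).mono
            (hFmono (Nat.le_pred_of_lt (Finset.mem_range.1 hj))) le_rfl
      · have hrw : H s = fun _ => 0 := by simp [hHdef, hs]
        rw [hrw]; exact measurable_const
  set φ : Ω → ℝ := fun ω => ∑ j ∈ Finset.range t,
    (dotp (Hp j ω) (Sb t ω - Sa j ω) - dotp (Hm j ω) (Sa t ω - Sb j ω)) with hφdef
  have hS : ∀ᵐ ω ∂P, ∀ s, s ≤ T → ∀ i, Sb s ω i ≤ Sa s ω i := by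
    rw [MeasureTheory.ae_all_iff]
    intro s
    by_cases hs : s ≤ T
    · exact (MeasureTheory.ae_all_iff.2 fun i => hba s hs i).mono fun ω hω _ => hω
    · exact Filter.Eventually.of_forall fun ω h => absurd h hs
  have key : ∀ ω, (∀ s, s ≤ T → ∀ i, Sb s ω i ≤ Sa s ω i) → φ ω ≤ xval Sb Sa T H ω := by
    intro ω hω
    set A : Fin d → ℝ := ∑ j ∈ Finset.range t, Hp j ω with hA
    set B : Fin d → ℝ := ∑ j ∈ Finset.range t, Hm j ω with hB
    have hAnn : ∀ i, 0 ≤ A i := by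
      intro i
      rw [hA]
      simp only [Finset.sum_apply]
      exact Finset.sum_nonneg fun j hj => (hnn j (Finset.mem_range.1 hj) ω i).1
    have hBnn : ∀ i, 0 ≤ B i := by
      intro i
      rw [hB]
      simp only [Finset.sum_apply]
      exact Finset.sum_nonneg fun j hj => (hnn j (Finset.mem_range.1 hj) ω i).2
    have hHt : H t ω = A - B := by
      simp [hHdef, hA, hB, Finset.sum_sub_distrib]
    have hφeq : φ ω = (∑ j ∈ Finset.range t, (dotp (Hm j ω) (Sb j ω) - dotp (Hp j ω) (Sa j ω)))
        + (dotp A (Sb t ω) - dotp B (Sa t ω)) := by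
      have h2 : dotp A (Sb t ω) - dotp B (Sa t ω)
          = ∑ j ∈ Finset.range t, (dotp (Hp j ω) (Sb t ω) - dotp (Hm j ω) (Sa t ω)) := by
        rw [hA, hB, dotp_sum_left, dotp_sum_left, Finset.sum_sub_distrib]
      rw [hφdef, h2, ← Finset.sum_add_distrib]
      exact Finset.sum_congr rfl fun j _ => by rw [dotp_sub_right, dotp_sub_right]; ring
    have hS1 : ∑ j ∈ Finset.range t, (dotp (Hm j ω) (Sb j ω) - dotp (Hp j ω) (Sa j ω))
        ≤ ∑ j ∈ Finset.Ico 1 (t + 1),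
            (dotp (BidAskFTAP.negPart (H j ω - H (j - 1) ω)) (Sb (j - 1) ω)
              - dotp (BidAskFTAP.posPart (H j ω - H (j - 1) ω)) (Sa (j - 1) ω)) := by
      rw [Finset.sum_Ico_eq_sum_range]
      simp only [Nat.add_sub_cancel]
      refine Finset.sum_le_sum fun j hj => ?_
      have hjt : j < t := Finset.mem_range.1 hj
      have e1 : 1 + j - 1 = j := by omega
      have h1 : H (1 + j) ω - H j ω = Hp j ω - Hm j ω := by
        have hj1 : j + 1 ≤ t := hjt
        have hjle : j ≤ t := hjt.le
        simp only [hHdef, Nat.add_comm 1 j, if_pos hj1, if_pos hjle, Finset.sum_range_succ]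
        abel
      simp only [e1, h1]
      exact vkey1 _ _ _ _ (fun i => (hnn j hjt ω i).1) (fun i => (hnn j hjt ω i).2)
        (hω j (by omega))
    have hS2C : dotp A (Sb t ω) - dotp B (Sa t ω)
        ≤ (∑ j ∈ Finset.Ico (t + 1) (T + 1),
            (dotp (BidAskFTAP.negPart (H j ω - H (j - 1) ω)) (Sb (j - 1) ω)
              - dotp (BidAskFTAP.posPart (H j ω - H (j - 1) ω)) (Sa (j - 1) ω)))
          + (dotp (BidAskFTAP.posPart (H T ω)) (Sb T ω)
              - dotp (BidAskFTAP.negPart (H T ω)) (Sa T ω)) := by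
      rcases eq_or_lt_of_le htT with heq | hlt
      · subst heq
        rw [Finset.Ico_self, Finset.sum_empty, hHt, zero_add]
        exact vkey2 A B (Sb t ω) (Sa t ω) hAnn hBnn (hω t le_rfl)
      · have hC0 : H T ω = 0 := by
          simp only [hHdef]
          rw [if_neg (by omega)]
        have hCeq : dotp (BidAskFTAP.posPart (H T ω)) (Sb T ω)
            - dotp (BidAskFTAP.negPart (H T ω)) (Sa T ω) = 0 := by
          rw [hC0, BidAskFTAP.posPart_zero, BidAskFTAP.negPart_zero, dotp_zero_left,
            dotp_zero_left, sub_self]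
        have hmem' : t + 1 ∈ Finset.Ico (t + 1) (T + 1) := Finset.mem_Ico.2 ⟨le_rfl, by omega⟩
        have hzero : ∀ j ∈ Finset.Ico (t + 1) (T + 1), j ≠ t + 1 →
            (dotp (BidAskFTAP.negPart (H j ω - H (j - 1) ω)) (Sb (j - 1) ω)
              - dotp (BidAskFTAP.posPart (H j ω - H (j - 1) ω)) (Sa (j - 1) ω)) = 0 := by
          intro j hj hne
          have hj' := Finset.mem_Ico.1 hj
          have hz1 : H j ω = 0 := by
            simp only [hHdef]
            rw [if_neg (by omega)]
          have hz2 : H (j - 1) ω = 0 := by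
            simp only [hHdef]
            rw [if_neg (by omega)]
          rw [hz1, hz2, sub_zero, BidAskFTAP.posPart_zero, BidAskFTAP.negPart_zero,
            dotp_zero_left, dotp_zero_left, sub_self]
        have hS2 : (∑ j ∈ Finset.Ico (t + 1) (T + 1),
            (dotp (BidAskFTAP.negPart (H j ω - H (j - 1) ω)) (Sb (j - 1) ω)
              - dotp (BidAskFTAP.posPart (H j ω - H (j - 1) ω)) (Sa (j - 1) ω)))
            = dotp (BidAskFTAP.posPart (A - B)) (Sb t ω)
              - dotp (BidAskFTAP.negPart (A - B)) (Sa t ω) := by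
          rw [Finset.sum_eq_single_of_mem (t + 1) hmem' hzero]
          have h0 : H (t + 1) ω = 0 := by
            simp only [hHdef]
            rw [if_neg (by omega)]
          rw [Nat.add_sub_cancel, h0, hHt, zero_sub, BidAskFTAP.negPart_neg,
            BidAskFTAP.posPart_neg]
        rw [hS2, hCeq, add_zero]
        exact vkey2 A B (Sb t ω) (Sa t ω) hAnn hBnn (hω t htT)
    have hsplit := Finset.sum_Ico_consecutive
        (fun j => dotp (BidAskFTAP.negPart (H j ω - H (j - 1) ω)) (Sb (j - 1) ω)
          - dotp (BidAskFTAP.posPart (H j ω - H (j - 1) ω)) (Sa (j - 1) ω))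
        (by omega : 1 ≤ t + 1) (by omega : t + 1 ≤ T + 1)
    have hIcc : Finset.Icc 1 T = Finset.Ico 1 (T + 1) := by rw [Finset.Ico_add_one_right_eq_Icc]
    calc φ ω = (∑ j ∈ Finset.range t, (dotp (Hm j ω) (Sb j ω) - dotp (Hp j ω) (Sa j ω)))
        + (dotp A (Sb t ω) - dotp B (Sa t ω)) := hφeq
      _ ≤ (∑ j ∈ Finset.Ico 1 (t + 1),
            (dotp (BidAskFTAP.negPart (H j ω - H (j - 1) ω)) (Sb (j - 1) ω)
              - dotp (BidAskFTAP.posPart (H j ω - H (j - 1) ω)) (Sa (j - 1) ω)))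
          + ((∑ j ∈ Finset.Ico (t + 1) (T + 1),
            (dotp (BidAskFTAP.negPart (H j ω - H (j - 1) ω)) (Sb (j - 1) ω)
              - dotp (BidAskFTAP.posPart (H j ω - H (j - 1) ω)) (Sa (j - 1) ω)))
            + (dotp (BidAskFTAP.posPart (H T ω)) (Sb T ω)
              - dotp (BidAskFTAP.negPart (H T ω)) (Sa T ω))) := add_le_add hS1 hS2C
      _ = xval Sb Sa T H ω := by rw [xval, hIcc, ← hsplit]; ring
  have hmeasφ : Measurable φ := by
    rw [hφdef]
    refine Finset.measurable_sum _ fun j hj => ?_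
    have hjT : j ≤ T := le_trans (Finset.mem_range.1 hj).le htT
    exact (meas_dotp (hmeasHp j (Finset.mem_range.1 hj))
        ((hmeasSb t htT).sub (hmeasSa j hjT))).sub
      (meas_dotp (hmeasHm j (Finset.mem_range.1 hj))
        ((hmeasSa t htT).sub (hmeasSb j hjT)))
  have hmeasx : Measurable fun ω => xval Sb Sa T H ω := by
    simp only [xval]
    refine Measurable.sub (Measurable.add ?_ ?_) ?_
    · refine Finset.measurable_sum _ fun j hj => ?_
      have hj' := Finset.mem_Icc.1 hj
      have hj1 : j - 1 ≤ T := by omega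
      exact (meas_dotp (meas_negPart ((hmeasHs j).sub (hmeasHs (j - 1)))) (hmeasSb _ hj1)).sub
        (meas_dotp (meas_posPart ((hmeasHs j).sub (hmeasHs (j - 1)))) (hmeasSa _ hj1))
    · exact meas_dotp (meas_posPart (hmeasHs T)) (hmeasSb T le_rfl)
    · exact meas_dotp (meas_negPart (hmeasHs T)) (hmeasSa T le_rfl)
  refine hNA f ⟨H, hstrat, fun ω => xval Sb Sa T H ω - φ ω + r ω, ?_, ?_, ?_⟩ hf0
  · rw [hFT]
    exact (hmeasx.sub hmeasφ).add hrm
  · filter_upwards [hS, hr0] with ω h1 h2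
    have := key ω h1
    linarith
  · refine hf.trans (Filter.Eventually.of_forall fun ω => ?_)
    ring
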